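/- arXiv:2405.12615 — 3 statements merged into one kernel-verified Lean document; each statement's English description precedes it below -/
import Mathlib

section
/- Let the current-step variables X = (X_1, …, X_n) have a full-support joint probability mass function, and let the next-step variables S' = (S'_1, …, S'_{n_s}) be generated by independent transitions: conditionally on X, the S'_j are independent with laws T_j(· | X). Let ε_1, …, ε_n and ε'_1, …, ε'_{n_s} be noise variables, all finite-valued, mutually independent and independent of (X, S'). Define observed variables X̂_i = ρ_i(X_i, ε_i) and Ŝ'_j = ρ'_j(S'_j, ε'_j) for given functions ρ_i, ρ'_j. Assume (restorability) there exist functions r_i with r_i(ρ_i(x, e), e) = x for all x, e; and assume (factorized noise posterior) that for every x̂ of positive probability, the conditional law of (ε_1, …, ε_n) given X̂ = x̂ equals the product over i of the conditional law of ε_i given X̂_i = x̂_i. Then for every i and j: if T_j does not depend on coordinate i (i.e. T_j takes equal values at any two inputs differing only in coordinate i), then the conditional independence X̂_i ⊥ Ŝ'_j | (X̂ \ {X̂_i}) holds under the joint law of the observed variables. -/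
open Finset

noncomputable section

private lemma ite_sum_push {α : Type*} {c : Prop} [Decidable c] {s : Finset α} (f : α → ℝ) :
    (if c then ∑ a ∈ s, f a else 0) = ∑ a ∈ s, if c then f a else 0 := by
  split_ifs <;> simp

private lemma sum_pi_collapse {η : Type*} [Fintype η] [DecidableEq η] {O : η → Type*}
    [∀ j, Fintype (O j)] [∀ j, DecidableEq (O j)]
    (F : ∀ j, O j) (t : (∀ j, O j) → ℝ) :
    (∑ so : ∀ j, O j, if (∀ j, F j = so j) then t so else 0) = t F := by
  rw [Finset.sum_eq_single F]
  · simp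
  · intro b _ hb
    rw [if_neg]
    intro h
    exact hb (funext fun j => (h j).symm)
  · intro h; exact absurd (Finset.mem_univ F) h

private lemma sum_pi_prod {η : Type*} [Fintype η] [DecidableEq η] {δ : η → Type*}
    [∀ j, Fintype (δ j)] (f : ∀ j, δ j → ℝ) :
    (∑ g : ∀ j, δ j, ∏ j, f j (g j)) = ∏ j, ∑ a, f j a := by
  rw [Finset.prod_univ_sum, Fintype.piFinset_univ]

/-- Current-step variables X with a full-support law, next-step
variables generated by independent transitions `Tj`, and independent restorable
observation noise on every variable.  If `Tj j` does not depend on coordinate `i` and the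
noise posterior given the observed current variables factorizes coordinatewise, then the
observed variables satisfy X̂ᵢ ⊥ Ŝ'ⱼ | (X̂ \ {X̂ᵢ}) under the joint law of the observed
variables. -/
theorem noisy_observation_preserves_conditional_independence
    (n ns : ℕ)
    (Xv Ev Ov : Fin n → Type) (Sv E'v O'v : Fin ns → Type)
    [∀ i, Fintype (Xv i)] [∀ i, DecidableEq (Xv i)] [∀ i, Nonempty (Xv i)]
    [∀ i, Fintype (Ev i)] [∀ i, DecidableEq (Ev i)] [∀ i, Nonempty (Ev i)]
    [∀ i, Fintype (Ov i)] [∀ i, DecidableEq (Ov i)] [∀ i, Nonempty (Ov i)]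
    [∀ j, Fintype (Sv j)] [∀ j, DecidableEq (Sv j)] [∀ j, Nonempty (Sv j)]
    [∀ j, Fintype (E'v j)] [∀ j, DecidableEq (E'v j)] [∀ j, Nonempty (E'v j)]
    [∀ j, Fintype (O'v j)] [∀ j, DecidableEq (O'v j)] [∀ j, Nonempty (O'v j)]
    -- full-support law of X
    (μ : (∀ i, Xv i) → ℝ) (hμpos : ∀ x, 0 < μ x) (hμsum : ∑ x, μ x = 1)
    -- independent transitions: conditionally on X the S'ⱼ are independent with laws Tⱼ(·|X)
    (Tj : ∀ j : Fin ns, (∀ i, Xv i) → Sv j → ℝ)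
    (hT0 : ∀ j x y, 0 ≤ Tj j x y) (hT1 : ∀ j x, ∑ y, Tj j x y = 1)
    -- mutually independent noise variables, independent of (X, S')
    (ν : ∀ i : Fin n, Ev i → ℝ) (hν0 : ∀ i e, 0 ≤ ν i e) (hν1 : ∀ i, ∑ e, ν i e = 1)
    (ν' : ∀ j : Fin ns, E'v j → ℝ) (hν'0 : ∀ j e, 0 ≤ ν' j e) (hν'1 : ∀ j, ∑ e, ν' j e = 1)
    -- perturbation functions
    (ρ : ∀ i : Fin n, Xv i → Ev i → Ov i) (ρ' : ∀ j : Fin ns, Sv j → E'v j → O'v j)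
    -- restorability of the current-step variables
    (r : ∀ i : Fin n, Ov i → Ev i → Xv i) (hr : ∀ i x e, r i (ρ i x e) e = x)
    -- joint law of observed variables (X̂, Ŝ')
    (Pobs : (∀ i, Ov i) → (∀ j, O'v j) → ℝ)
    (hPobs : ∀ xo so, Pobs xo so =
      ∑ x : ∀ i, Xv i, ∑ e : ∀ i, Ev i, ∑ s' : ∀ j, Sv j, ∑ e' : ∀ j, E'v j,
        if (∀ i, ρ i (x i) (e i) = xo i) ∧ (∀ j, ρ' j (s' j) (e' j) = so j) then
          μ x * (∏ i, ν i (e i)) * (∏ j, Tj j x (s' j)) * (∏ j, ν' j (e' j))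
        else 0)
    -- law of X̂ and joint laws with the current-step noise
    (A : (∀ i, Ov i) → ℝ)
    (hA : ∀ xo, A xo = ∑ x : ∀ i, Xv i, ∑ e : ∀ i, Ev i,
      if ∀ i, ρ i (x i) (e i) = xo i then μ x * ∏ i, ν i (e i) else 0)
    (B : (∀ i, Ov i) → (∀ i, Ev i) → ℝ)
    (hB : ∀ xo e, B xo e = ∑ x : ∀ i, Xv i,
      if ∀ i, ρ i (x i) (e i) = xo i then μ x * ∏ i, ν i (e i) else 0)
    (Bi : ∀ i : Fin n, Ov i → Ev i → ℝ)
    (hBi : ∀ i xoi ei, Bi i xoi ei = ∑ x : ∀ i', Xv i', ∑ e : ∀ i', Ev i',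
      if ρ i (x i) (e i) = xoi ∧ e i = ei then μ x * ∏ i', ν i' (e i') else 0)
    (Ai : ∀ i : Fin n, Ov i → ℝ) (hAi : ∀ i xoi, Ai i xoi = ∑ ei, Bi i xoi ei)
    -- factorized noise posterior: P(ε = e | X̂ = xo) = ∏ᵢ P(εᵢ = eᵢ | X̂ᵢ = xoᵢ)
    (hfact : ∀ xo, 0 < A xo → ∀ e,
      B xo e * ∏ i, Ai i (xo i) = A xo * ∏ i, Bi i (xo i) (e i)) :
    ∀ (i : Fin n) (j : Fin ns),
      -- if Tⱼ does not depend on coordinate i …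
      (∀ x x' : ∀ i', Xv i', (∀ i', i' ≠ i → x i' = x' i') → ∀ y, Tj j x y = Tj j x' y) →
      -- … then X̂ᵢ ⊥ Ŝ'ⱼ | (X̂ \ {X̂ᵢ}) under the law of the observed variables
      ∀ (xo : ∀ i', Ov i') (yo : O'v j),
        (∑ so : ∀ j', O'v j', if so j = yo then Pobs xo so else 0) *
          (∑ xi : Ov i, ∑ so : ∀ j', O'v j', Pobs (Function.update xo i xi) so) =
        (∑ so : ∀ j', O'v j', Pobs xo so) *
          (∑ xi : Ov i, ∑ so : ∀ j', O'v j',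
            if so j = yo then Pobs (Function.update xo i xi) so else 0) := by
  intro i j hTd xo yo
  -- abbreviations
  set G : (∀ i', Xv i') → ℝ :=
    fun x => ∑ s : Sv j, ∑ e : E'v j, if ρ' j s e = yo then Tj j x s * ν' j e else 0 with hGdef
  set R : (∀ i', Ov i') → (∀ i', Ev i') → ∀ i', Xv i' :=
    fun xo' e i' => r i' (xo' i') (e i') with hRdef
  set C : (∀ i', Ov i') → ℝ :=
    fun xo' => ∑ e : ∀ i', Ev i', B xo' e * G (R xo' e) with hCdef
  set E : (∀ i', Ov i') → ℝ :=
    fun xo' => ∑ e : ∀ i', Ev i', (∏ i', Bi i' (xo' i') (e i')) * G (R xo' e) with hEdef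
  have hμν_nn : ∀ (x : ∀ i', Xv i') (e : ∀ i', Ev i'), 0 ≤ μ x * ∏ i', ν i' (e i') :=
    fun x e => mul_nonneg (hμpos x).le (Finset.prod_nonneg fun i' _ => hν0 i' (e i'))
  have sumT : ∀ x : ∀ i', Xv i', (∑ s' : ∀ j', Sv j', ∏ j', Tj j' x (s' j')) = 1 := by
    intro x
    rw [sum_pi_prod]
    exact Finset.prod_eq_one fun j' _ => hT1 j' x
  have sumν' : (∑ e' : ∀ j', E'v j', ∏ j', ν' j' (e' j')) = 1 := by
    rw [sum_pi_prod]
    exact Finset.prod_eq_one fun j' _ => hν'1 j'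
  -- marginal over all next-step observations
  have hA' : ∀ xo', (∑ so : ∀ j', O'v j', Pobs xo' so) = A xo' := by
    intro xo'
    rw [hA]
    simp only [hPobs]
    rw [Finset.sum_comm]
    refine Finset.sum_congr rfl fun x _ => ?_
    rw [Finset.sum_comm]
    refine Finset.sum_congr rfl fun e _ => ?_
    rw [Finset.sum_comm]
    have step : (∑ s' : ∀ j', Sv j', ∑ so : ∀ j', O'v j', ∑ e' : ∀ j', E'v j',
        if (∀ i', ρ i' (x i') (e i') = xo' i') ∧ (∀ j', ρ' j' (s' j') (e' j') = so j') then
          μ x * (∏ i', ν i' (e i')) * (∏ j', Tj j' x (s' j')) * (∏ j', ν' j' (e' j'))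
        else 0) =
        ∑ s' : ∀ j', Sv j', ∑ e' : ∀ j', E'v j',
          if (∀ i', ρ i' (x i') (e i') = xo' i') then
            μ x * (∏ i', ν i' (e i')) * (∏ j', Tj j' x (s' j')) * (∏ j', ν' j' (e' j'))
          else 0 := by
      refine Finset.sum_congr rfl fun s' _ => ?_
      rw [Finset.sum_comm]
      refine Finset.sum_congr rfl fun e' _ => ?_
      have h1 : ∀ so : ∀ j', O'v j',
          (if (∀ i', ρ i' (x i') (e i') = xo' i') ∧ (∀ j', ρ' j' (s' j') (e' j') = so j') then
            μ x * (∏ i', ν i' (e i')) * (∏ j', Tj j' x (s' j')) * (∏ j', ν' j' (e' j'))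
          else 0) =
          (if (∀ j', ρ' j' (s' j') (e' j') = so j') then
            (if (∀ i', ρ i' (x i') (e i') = xo' i') then
              μ x * (∏ i', ν i' (e i')) * (∏ j', Tj j' x (s' j')) * (∏ j', ν' j' (e' j'))
            else 0)
          else 0) := by
        intro so
        by_cases hb : (∀ j', ρ' j' (s' j') (e' j') = so j') <;>
          by_cases hc : (∀ i', ρ i' (x i') (e i') = xo' i') <;> simp [hb, hc]
      simp only [h1]
      refine (Finset.sum_eq_single (fun j' => ρ' j' (s' j') (e' j')) ?_ ?_).trans ?_
      · intro b _ hb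
        rw [if_neg]
        intro hcon
        exact hb (funext fun j' => (hcon j').symm)
      · intro h; exact absurd (Finset.mem_univ _) h
      · simp
    rw [step]
    by_cases hc : (∀ i', ρ i' (x i') (e i') = xo' i')
    · simp only [if_pos hc]
      have inner : ∀ s' : ∀ j', Sv j',
          (∑ e' : ∀ j', E'v j',
            μ x * (∏ i', ν i' (e i')) * (∏ j', Tj j' x (s' j')) * (∏ j', ν' j' (e' j'))) =
          μ x * (∏ i', ν i' (e i')) * (∏ j', Tj j' x (s' j')) := by
        intro s'
        rw [← Finset.mul_sum, sumν', mul_one]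
      simp only [inner]
      rw [← Finset.mul_sum, sumT, mul_one]
    · simp only [if_neg hc, Finset.sum_const_zero]
  -- the j-coordinate kernel sum
  have S1core : ∀ x : ∀ i', Xv i',
      (∑ s' : ∀ j', Sv j', ∑ e' : ∀ j', E'v j',
        if ρ' j (s' j) (e' j) = yo then (∏ j', Tj j' x (s' j')) * ∏ j', ν' j' (e' j') else 0)
      = G x := by
    intro x
    have hterm : ∀ (s' : ∀ j', Sv j') (e' : ∀ j', E'v j'),
        (if ρ' j (s' j) (e' j) = yo then (∏ j', Tj j' x (s' j')) * ∏ j', ν' j' (e' j') else 0)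
        = ∏ j', (if h : j' = j then
            (if ρ' j' (s' j') (e' j') = h.symm ▸ yo then Tj j' x (s' j') * ν' j' (e' j') else 0)
          else Tj j' x (s' j') * ν' j' (e' j')) := by
      intro s' e'
      have hsplit : (∏ j', (if h : j' = j then
            (if ρ' j' (s' j') (e' j') = h.symm ▸ yo then Tj j' x (s' j') * ν' j' (e' j') else 0)
          else Tj j' x (s' j') * ν' j' (e' j'))) =
          (if ρ' j (s' j) (e' j) = yo then Tj j x (s' j) * ν' j (e' j) else 0) *
            ∏ j' ∈ univ.erase j, Tj j' x (s' j') * ν' j' (e' j') := by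
        rw [← Finset.mul_prod_erase _ _ (Finset.mem_univ j), dif_pos rfl]
        congr 1
        refine Finset.prod_congr rfl fun j' hj' => ?_
        rw [dif_neg (Finset.mem_erase.1 hj').1]
      rw [hsplit]
      by_cases hc : ρ' j (s' j) (e' j) = yo
      · rw [if_pos hc, if_pos hc, ← Finset.prod_mul_distrib,
          ← Finset.mul_prod_erase univ (fun j' => Tj j' x (s' j') * ν' j' (e' j'))
            (Finset.mem_univ j)]
      · rw [if_neg hc, if_neg hc, zero_mul]
    simp only [hterm]
    have swap1 : ∀ s' : ∀ j', Sv j',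
        (∑ e' : ∀ j', E'v j', ∏ j', (if h : j' = j then
            (if ρ' j' (s' j') (e' j') = h.symm ▸ yo then Tj j' x (s' j') * ν' j' (e' j') else 0)
          else Tj j' x (s' j') * ν' j' (e' j'))) =
        ∏ j', ∑ e, (if h : j' = j then
            (if ρ' j' (s' j') e = h.symm ▸ yo then Tj j' x (s' j') * ν' j' e else 0)
          else Tj j' x (s' j') * ν' j' e) := by
      intro s'
      exact sum_pi_prod (fun j' e => if h : j' = j then
        (if ρ' j' (s' j') e = h.symm ▸ yo then Tj j' x (s' j') * ν' j' e else 0)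
      else Tj j' x (s' j') * ν' j' e)
    simp only [swap1]
    rw [sum_pi_prod (fun j' s => ∑ e, (if h : j' = j then
        (if ρ' j' s e = h.symm ▸ yo then Tj j' x s * ν' j' e else 0)
      else Tj j' x s * ν' j' e))]
    rw [Finset.prod_eq_single j]
    · rw [hGdef]
      refine Finset.sum_congr rfl fun s _ => Finset.sum_congr rfl fun e _ => ?_
      rw [dif_pos rfl]
    · intro j' _ hj'
      simp only [dif_neg hj']
      rw [← Finset.sum_mul_sum, hT1, hν'1, mul_one]
    · intro h; exact absurd (Finset.mem_univ j) h
  -- marginal with the j-th next-step observation pinned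
  have hC : ∀ xo', (∑ so : ∀ j', O'v j', if so j = yo then Pobs xo' so else 0) = C xo' := by
    intro xo'
    simp only [hCdef]
    have step1 : (∑ so : ∀ j', O'v j', if so j = yo then Pobs xo' so else 0) =
        ∑ x, ∑ e : ∀ i', Ev i',
          (if (∀ i', ρ i' (x i') (e i') = xo' i') then μ x * ∏ i', ν i' (e i') else 0) * G x := by
      simp only [hPobs, ite_sum_push]
      rw [Finset.sum_comm]
      refine Finset.sum_congr rfl fun x _ => ?_
      rw [Finset.sum_comm]
      refine Finset.sum_congr rfl fun e _ => ?_
      rw [Finset.sum_comm]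
      have step : (∑ s' : ∀ j', Sv j', ∑ so : ∀ j', O'v j', ∑ e' : ∀ j', E'v j',
          if so j = yo then
            (if (∀ i', ρ i' (x i') (e i') = xo' i') ∧ (∀ j', ρ' j' (s' j') (e' j') = so j') then
              μ x * (∏ i', ν i' (e i')) * (∏ j', Tj j' x (s' j')) * (∏ j', ν' j' (e' j'))
            else 0)
          else 0) =
          ∑ s' : ∀ j', Sv j', ∑ e' : ∀ j', E'v j',
            if (∀ i', ρ i' (x i') (e i') = xo' i') then
              (μ x * ∏ i', ν i' (e i')) *
                (if ρ' j (s' j) (e' j) = yo then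
                  (∏ j', Tj j' x (s' j')) * ∏ j', ν' j' (e' j') else 0)
            else 0 := by
        refine Finset.sum_congr rfl fun s' _ => ?_
        rw [Finset.sum_comm]
        refine Finset.sum_congr rfl fun e' _ => ?_
        have h1 : ∀ so : ∀ j', O'v j',
            (if so j = yo then
              (if (∀ i', ρ i' (x i') (e i') = xo' i') ∧ (∀ j', ρ' j' (s' j') (e' j') = so j') then
                μ x * (∏ i', ν i' (e i')) * (∏ j', Tj j' x (s' j')) * (∏ j', ν' j' (e' j'))
              else 0)
            else 0) =
            (if (∀ j', ρ' j' (s' j') (e' j') = so j') then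
              (if so j = yo ∧ (∀ i', ρ i' (x i') (e i') = xo' i') then
                μ x * (∏ i', ν i' (e i')) * (∏ j', Tj j' x (s' j')) * (∏ j', ν' j' (e' j'))
              else 0)
            else 0) := by
          intro so
          by_cases ha : so j = yo <;>
            by_cases hb : (∀ j', ρ' j' (s' j') (e' j') = so j') <;>
            by_cases hc : (∀ i', ρ i' (x i') (e i') = xo' i') <;> simp [ha, hb, hc]
        simp only [h1]
        have hcol : (∑ so : ∀ j', O'v j',
            if (∀ j', ρ' j' (s' j') (e' j') = so j') then
              (if so j = yo ∧ (∀ i', ρ i' (x i') (e i') = xo' i') then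
                μ x * (∏ i', ν i' (e i')) * (∏ j', Tj j' x (s' j')) * (∏ j', ν' j' (e' j'))
              else 0)
            else 0) =
            (if ρ' j (s' j) (e' j) = yo ∧ (∀ i', ρ i' (x i') (e i') = xo' i') then
              μ x * (∏ i', ν i' (e i')) * (∏ j', Tj j' x (s' j')) * (∏ j', ν' j' (e' j'))
            else 0) := by
          refine (Finset.sum_eq_single (fun j' => ρ' j' (s' j') (e' j')) ?_ ?_).trans ?_
          · intro b _ hb
            rw [if_neg]
            intro hcon
            exact hb (funext fun j' => (hcon j').symm)
          · intro h; exact absurd (Finset.mem_univ _) h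
          · simp
        rw [hcol]
        by_cases ha : ρ' j (s' j) (e' j) = yo <;>
          by_cases hc : (∀ i', ρ i' (x i') (e i') = xo' i') <;> simp [ha, hc] <;> ring
      rw [step]
      by_cases hc : (∀ i', ρ i' (x i') (e i') = xo' i')
      · simp only [if_pos hc]
        rw [← S1core x, Finset.mul_sum]
        refine Finset.sum_congr rfl fun s' _ => ?_
        rw [Finset.mul_sum]
      · simp only [if_neg hc, Finset.sum_const_zero, zero_mul]
    rw [step1, Finset.sum_comm]
    refine Finset.sum_congr rfl fun e _ => ?_
    have step2 : ∀ x, (if (∀ i', ρ i' (x i') (e i') = xo' i') then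
          μ x * ∏ i', ν i' (e i') else 0) * G x =
        (if (∀ i', ρ i' (x i') (e i') = xo' i') then
          μ x * ∏ i', ν i' (e i') else 0) * G (R xo' e) := by
      intro x
      by_cases hc : (∀ i', ρ i' (x i') (e i') = xo' i')
      · have hx : R xo' e = x := by
          funext i'
          rw [hRdef]
          simp only
          rw [← hc i', hr]
        rw [hx]
      · simp [hc]
    simp only [step2]
    rw [← Finset.sum_mul, ← hB]
  -- basic positivity facts
  have hBnn : ∀ xo' e, 0 ≤ B xo' e := by
    intro xo' e
    rw [hB]
    refine Finset.sum_nonneg fun x _ => ?_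
    split_ifs
    · exact hμν_nn x e
    · exact le_refl 0
  have hAB : ∀ xo', A xo' = ∑ e : ∀ i', Ev i', B xo' e := by
    intro xo'
    rw [hA, Finset.sum_comm]
    exact Finset.sum_congr rfl fun e _ => (hB xo' e).symm
  have hAnn : ∀ xo', 0 ≤ A xo' := by
    intro xo'
    rw [hAB]
    exact Finset.sum_nonneg fun e _ => hBnn xo' e
  have hAi' : ∀ (i₀ : Fin n) (o : Ov i₀), Ai i₀ o =
      ∑ x, ∑ e : ∀ i', Ev i',
        if ρ i₀ (x i₀) (e i₀) = o then μ x * ∏ i', ν i' (e i') else 0 := by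
    intro i₀ o
    rw [hAi]
    simp only [hBi]
    rw [Finset.sum_comm]
    refine Finset.sum_congr rfl fun x _ => ?_
    rw [Finset.sum_comm]
    refine Finset.sum_congr rfl fun e _ => ?_
    rw [Finset.sum_eq_single (e i₀)]
    · simp
    · intro b _ hb
      rw [if_neg]
      rintro ⟨_, h2⟩
      exact hb h2.symm
    · intro h; exact absurd (Finset.mem_univ _) h
  have hAle : ∀ xo' (i₀ : Fin n), A xo' ≤ Ai i₀ (xo' i₀) := by
    intro xo' i₀
    rw [hA, hAi']
    refine Finset.sum_le_sum fun x _ => Finset.sum_le_sum fun e _ => ?_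
    split_ifs with h1 h2
    · exact le_refl _
    · exact absurd (h1 i₀) h2
    · exact hμν_nn x e
    · exact le_refl 0
  have hCzero : ∀ xo', A xo' = 0 → C xo' = 0 := by
    intro xo' h0
    have h1 : (∑ e : ∀ i', Ev i', B xo' e) = 0 := by rw [← hAB xo', h0]
    have hB0 : ∀ e, B xo' e = 0 := fun e =>
      (Finset.sum_eq_zero_iff_of_nonneg (fun e _ => hBnn xo' e)).1 h1 e (Finset.mem_univ e)
    simp only [hCdef]
    exact Finset.sum_eq_zero fun e _ => by rw [hB0 e, zero_mul]
  -- key identity from the factorized posterior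
  have hK : ∀ xo', C xo' * (∏ i', Ai i' (xo' i')) = A xo' * E xo' := by
    intro xo'
    by_cases h0 : A xo' = 0
    · rw [hCzero xo' h0, h0, zero_mul, zero_mul]
    · have hpos : 0 < A xo' := lt_of_le_of_ne (hAnn xo') (Ne.symm h0)
      simp only [hCdef, hEdef]
      rw [Finset.sum_mul, Finset.mul_sum]
      refine Finset.sum_congr rfl fun e _ => ?_
      have hf := hfact xo' hpos e
      calc B xo' e * G (R xo' e) * ∏ i', Ai i' (xo' i')
          = (B xo' e * ∏ i', Ai i' (xo' i')) * G (R xo' e) := by ring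
        _ = (A xo' * ∏ i', Bi i' (xo' i') (e i')) * G (R xo' e) := by rw [hf]
        _ = A xo' * ((∏ i', Bi i' (xo' i') (e i')) * G (R xo' e)) := by ring
  -- G only depends on coordinates other than i
  have hGind : ∀ x x' : ∀ i', Xv i', (∀ i', i' ≠ i → x i' = x' i') → G x = G x' := by
    intro x x' hxx
    rw [hGdef]
    refine Finset.sum_congr rfl fun s _ => Finset.sum_congr rfl fun e _ => ?_
    rw [hTd x x' hxx s]
  have hGR1 : ∀ (xi : Ov i) (e : ∀ i', Ev i'),
      G (R (Function.update xo i xi) e) = G (R xo e) := by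
    intro xi e
    refine hGind _ _ fun i' hi' => ?_
    rw [hRdef]
    simp only
    rw [Function.update_of_ne hi']
  have hGR2 : ∀ (e : ∀ i', Ev i') (ei : Ev i),
      G (R xo (Function.update e i ei)) = G (R xo e) := by
    intro e ei
    refine hGind _ _ fun i' hi' => ?_
    rw [hRdef]
    simp only
    rw [Function.update_of_ne hi']
  -- the exchange identity
  have hL2 : ∀ xi : Ov i, E (Function.update xo i xi) * Ai i (xo i) = E xo * Ai i xi := by
    intro xi
    have hE1 : E (Function.update xo i xi) =
        ∑ e : ∀ i', Ev i',
          (∏ i', Bi i' (Function.update xo i xi i') (e i')) * G (R xo e) := by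
      simp only [hEdef]
      exact Finset.sum_congr rfl fun e _ => by rw [hGR1 xi e]
    rw [hE1, hAi i (xo i), hAi i xi]
    simp only [hEdef]
    rw [Finset.sum_mul_sum, Finset.sum_mul_sum]
    have conv1 : (∑ e : ∀ i', Ev i', ∑ ei : Ev i,
        ((∏ i', Bi i' (Function.update xo i xi i') (e i')) * G (R xo e)) * Bi i (xo i) ei) =
        ∑ p : ((∀ i', Ev i') × Ev i),
          ((∏ i', Bi i' (Function.update xo i xi i') (p.1 i')) * G (R xo p.1)) *
            Bi i (xo i) p.2 :=
      (Fintype.sum_prod_type (fun p : ((∀ i', Ev i') × Ev i) =>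
        ((∏ i', Bi i' (Function.update xo i xi i') (p.1 i')) * G (R xo p.1)) *
          Bi i (xo i) p.2)).symm
    have conv2 : (∑ e : ∀ i', Ev i', ∑ ei : Ev i,
        ((∏ i', Bi i' (xo i') (e i')) * G (R xo e)) * Bi i xi ei) =
        ∑ p : ((∀ i', Ev i') × Ev i),
          ((∏ i', Bi i' (xo i') (p.1 i')) * G (R xo p.1)) * Bi i xi p.2 :=
      (Fintype.sum_prod_type (fun p : ((∀ i', Ev i') × Ev i) =>
        ((∏ i', Bi i' (xo i') (p.1 i')) * G (R xo p.1)) * Bi i xi p.2)).symm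
    rw [conv1, conv2]
    have hinv : Function.Involutive
        (fun p : ((∀ i', Ev i') × Ev i) => (Function.update p.1 i p.2, p.1 i)) := by
      rintro ⟨e, ei⟩
      simp [Function.update_idem, Function.update_eq_self]
    refine Fintype.sum_bijective _ hinv.bijective _ _ ?_
    rintro ⟨e, ei⟩
    simp only
    rw [hGR2 e ei]
    have p1 : (∏ i', Bi i' (Function.update xo i xi i') (e i')) =
        Bi i xi (e i) * ∏ i' ∈ univ.erase i, Bi i' (xo i') (e i') := by
      rw [← Finset.mul_prod_erase _ _ (Finset.mem_univ i), Function.update_self]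
      congr 1
      exact Finset.prod_congr rfl fun i' hi' => by
        rw [Function.update_of_ne (Finset.mem_erase.1 hi').1]
    have p2 : (∏ i', Bi i' (xo i') (Function.update e i ei i')) =
        Bi i (xo i) ei * ∏ i' ∈ univ.erase i, Bi i' (xo i') (e i') := by
      rw [← Finset.mul_prod_erase _ _ (Finset.mem_univ i), Function.update_self]
      congr 1
      exact Finset.prod_congr rfl fun i' hi' => by
        rw [Function.update_of_ne (Finset.mem_erase.1 hi').1]
    rw [p1, p2]
    ring
  -- assemble
  simp only [hC, hA']
  by_cases h0 : A xo = 0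
  · rw [hCzero xo h0, h0, zero_mul, zero_mul]
  · have hApos : 0 < A xo := lt_of_le_of_ne (hAnn xo) (Ne.symm h0)
    have hAipos : ∀ i' : Fin n, 0 < Ai i' (xo i') :=
      fun i' => lt_of_lt_of_le hApos (hAle xo i')
    have hPpos : 0 < ∏ i', Ai i' (xo i') :=
      Finset.prod_pos fun i' _ => hAipos i'
    have hQ : ∀ xi : Ov i, (∏ i', Ai i' (Function.update xo i xi i')) =
        Ai i xi * ∏ i' ∈ univ.erase i, Ai i' (xo i') := by
      intro xi
      rw [← Finset.mul_prod_erase _ _ (Finset.mem_univ i), Function.update_self]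
      congr 1
      exact Finset.prod_congr rfl fun i' hi' => by
        rw [Function.update_of_ne (Finset.mem_erase.1 hi').1]
    have hP : (∏ i', Ai i' (xo i')) = Ai i (xo i) * ∏ i' ∈ univ.erase i, Ai i' (xo i') :=
      (Finset.mul_prod_erase _ _ (Finset.mem_univ i)).symm
    have hterm : ∀ xi : Ov i,
        C (Function.update xo i xi) * ∏ i', Ai i' (xo i') =
        A (Function.update xo i xi) * E xo := by
      intro xi
      by_cases hxi : Ai i xi = 0
      · have hA0 : A (Function.update xo i xi) = 0 := by
          refine le_antisymm ?_ (hAnn _)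
          have := hAle (Function.update xo i xi) i
          rwa [Function.update_self, hxi] at this
        rw [hA0, hCzero _ hA0, zero_mul, zero_mul]
      · have h1 := hK (Function.update xo i xi)
        rw [hQ xi] at h1
        have h2 := hL2 xi
        apply mul_right_cancel₀ hxi
        rw [hP]
        linear_combination Ai i (xo i) * h1 + A (Function.update xo i xi) * h2
    apply mul_right_cancel₀ (ne_of_gt hPpos)
    calc C xo * (∑ xi, A (Function.update xo i xi)) * ∏ i', Ai i' (xo i')
        = (C xo * ∏ i', Ai i' (xo i')) * ∑ xi, A (Function.update xo i xi) := by ring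
      _ = (A xo * E xo) * ∑ xi, A (Function.update xo i xi) := by rw [hK xo]
      _ = A xo * ∑ xi, A (Function.update xo i xi) * E xo := by
          rw [← Finset.sum_mul]; ring
      _ = A xo * ∑ xi, C (Function.update xo i xi) * ∏ i', Ai i' (xo i') := by
          rw [Finset.sum_congr rfl fun xi _ => (hterm xi).symm]
      _ = A xo * (∑ xi, C (Function.update xo i xi)) * ∏ i', Ai i' (xo i') := by
          rw [← Finset.sum_mul]; ring
end
end

section
/- Consider variables (X, ε, X̂, S', ε', Ŝ'), where X = (X_1, …, X_n) are clean current-step variables, ε = (ε_1, …, ε_n) and ε' = (ε'_1, …, ε'_{n_s}) are noise variables, X̂ = (X̂_1, …, X̂_n) are observed current-step variables, S' = (S'_1, …, S'_{n_s}) are clean next-step variables, and Ŝ' = (Ŝ'_1, …, Ŝ'_{n_s}) are observed next-step variables. Let G⁺ be a directed acyclic graph on these variables in which: the vertices X form an arbitrary DAG among themselves; each S'_j has a parent set Pa(S'_j) ⊆ X and its only child is Ŝ'_j; each ε_i is a root whose only child is X̂_i, and each ε'_j is a root whose only child is Ŝ'_j; each X̂_i has exactly the parents {X_i, ε_i} and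 no children; and each Ŝ'_j has exactly the parents {S'_j, ε'_j} and no children. If the joint distribution of all these variables is faithful to G⁺, then for every i and j with X_i ∈ Pa(S'_j), the conditional independence X̂_i ⊥ Ŝ'_j | ({X̂_1, …, X̂_n} \ {X̂_i}) fails. -/
open Finset

noncomputable section

/-- Marginal probability that a configuration agrees with `x` on the coordinates in `E`. -/
def marg {V : Type*} [Fintype V] [DecidableEq V] {val : V → Type*}
    [∀ v, Fintype (val v)] [∀ v, DecidableEq (val v)]
    (p : (∀ v, val v) → ℝ) (E : Finset V) (x : ∀ v, val v) : ℝ :=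
  ∑ y : ∀ v, val v, if ∀ v ∈ E, y v = x v then p y else 0

/-- Conditional independence X ⊥ Y | Z, in cross-multiplied form. -/
def CondIndep {V : Type*} [Fintype V] [DecidableEq V] {val : V → Type*}
    [∀ v, Fintype (val v)] [∀ v, DecidableEq (val v)]
    (p : (∀ v, val v) → ℝ) (X Y Z : Finset V) : Prop :=
  ∀ x : ∀ v, val v,
    marg p (X ∪ Y ∪ Z) x * marg p Z x = marg p (X ∪ Z) x * marg p (Y ∪ Z) x

/-- An undirected path in a directed graph: consecutive vertices joined by an edge
in either direction, with no repeated vertex. -/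
def IsUndirPath {V : Type*} (E : V → V → Prop) (l : List V) : Prop :=
  l.Chain' (fun a b => E a b ∨ E b a) ∧ l.Nodup

/-- A path is blocked by `Z`: it contains a chain or fork whose middle vertex is in `Z`,
or a collider such that neither the middle vertex nor any of its descendants is in `Z`. -/
def BlockedPath {V : Type*} (E : V → V → Prop) (Z : Set V) (l : List V) : Prop :=
  ∃ (l₁ l₂ : List V) (a b c : V), l = l₁ ++ a :: b :: c :: l₂ ∧
    ((((E a b ∧ E b c) ∨ (E c b ∧ E b a) ∨ (E b a ∧ E b c)) ∧ b ∈ Z) ∨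
     ((E a b ∧ E c b) ∧ b ∉ Z ∧ ∀ d, Relation.TransGen E b d → d ∉ Z))

/-- `X` and `Y` are d-separated by `Z`. -/
def DSeparated {V : Type*} (E : V → V → Prop) (X Y Z : Set V) : Prop :=
  ∀ l : List V, IsUndirPath E l →
    (∃ u ∈ X, l.head? = some u) → (∃ w ∈ Y, l.getLast? = some w) →
    BlockedPath E Z l

/-- The graph is acyclic. -/
def Acyclic {V : Type*} (E : V → V → Prop) : Prop :=
  ∀ v, ¬ Relation.TransGen E v v

/-- `p` is faithful to the DAG: every conditional independence between disjoint sets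
of variables is a d-separation. -/
def FaithfulTo {V : Type*} [Fintype V] [DecidableEq V] {val : V → Type*}
    [∀ v, Fintype (val v)] [∀ v, DecidableEq (val v)]
    (p : (∀ v, val v) → ℝ) (E : V → V → Prop) : Prop :=
  ∀ X Y Z : Finset V, Disjoint X Y → Disjoint X Z → Disjoint Y Z →
    CondIndep p X Y Z → DSeparated E ↑X ↑Y ↑Z

/-- The variables of the noisy-observation model: clean current variables `x`, current
noise `eps`, observed current variables `xh`, clean next-step variables `s`, next-step
noise `eps'`, and observed next-step variables `sh`. -/
inductive NoisyVar (n ns : ℕ) where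
  | x (i : Fin n)
  | eps (i : Fin n)
  | xh (i : Fin n)
  | s (j : Fin ns)
  | eps' (j : Fin ns)
  | sh (j : Fin ns)
  deriving DecidableEq, Fintype

/-- Value types of the variables of the noisy-observation model. -/
def nval {n ns : ℕ} (Xv Ev Ov : Fin n → Type) (Sv E'v O'v : Fin ns → Type) :
    NoisyVar n ns → Type
  | .x i => Xv i
  | .eps i => Ev i
  | .xh i => Ov i
  | .s j => Sv j
  | .eps' j => E'v j
  | .sh j => O'v j

instance {n ns : ℕ} (Xv Ev Ov : Fin n → Type) (Sv E'v O'v : Fin ns → Type)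
    [∀ i, Fintype (Xv i)] [∀ i, Fintype (Ev i)] [∀ i, Fintype (Ov i)]
    [∀ j, Fintype (Sv j)] [∀ j, Fintype (E'v j)] [∀ j, Fintype (O'v j)] :
    ∀ v, Fintype (nval Xv Ev Ov Sv E'v O'v v)
  | .x i => inferInstanceAs (Fintype (Xv i))
  | .eps i => inferInstanceAs (Fintype (Ev i))
  | .xh i => inferInstanceAs (Fintype (Ov i))
  | .s j => inferInstanceAs (Fintype (Sv j))
  | .eps' j => inferInstanceAs (Fintype (E'v j))
  | .sh j => inferInstanceAs (Fintype (O'v j))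

instance {n ns : ℕ} (Xv Ev Ov : Fin n → Type) (Sv E'v O'v : Fin ns → Type)
    [∀ i, DecidableEq (Xv i)] [∀ i, DecidableEq (Ev i)] [∀ i, DecidableEq (Ov i)]
    [∀ j, DecidableEq (Sv j)] [∀ j, DecidableEq (E'v j)] [∀ j, DecidableEq (O'v j)] :
    ∀ v, DecidableEq (nval Xv Ev Ov Sv E'v O'v v)
  | .x i => inferInstanceAs (DecidableEq (Xv i))
  | .eps i => inferInstanceAs (DecidableEq (Ev i))
  | .xh i => inferInstanceAs (DecidableEq (Ov i))
  | .s j => inferInstanceAs (DecidableEq (Sv j))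
  | .eps' j => inferInstanceAs (DecidableEq (E'v j))
  | .sh j => inferInstanceAs (DecidableEq (O'v j))

/-! Faithfulness turns X̂ᵢ ⊥ Ŝ'ⱼ | X̂ \ {X̂ᵢ} into a d-separation. But the path
X̂ᵢ ← Xᵢ → S'ⱼ → Ŝ'ⱼ is open given X̂ \ {X̂ᵢ}: neither Xᵢ nor S'ⱼ is conditioned on, and
acyclicity rules out colliders. -/

section DSeparation

variable {V : Type*} {E : V → V → Prop}

theorem Acyclic.not_edge_of_edge (hE : Acyclic E) {a b : V} (hab : E a b) : ¬ E b a :=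
  fun hba => hE a (.tail (.single hab) hba)

theorem isUndirPath_fork_chain {u a b w : V} (hau : E a u) (hab : E a b) (hbw : E b w)
    (hnodup : [u, a, b, w].Nodup) : IsUndirPath E [u, a, b, w] :=
  ⟨List.isChain_cons_cons.mpr ⟨Or.inr hau, List.isChain_cons_cons.mpr
    ⟨Or.inl hab, List.isChain_pair.mpr (Or.inl hbw)⟩⟩, hnodup⟩

theorem List.consecutive_triple_of_four {u a b w x y z : V} {l₁ l₂ : List V}
    (h : [u, a, b, w] = l₁ ++ x :: y :: z :: l₂) :
    (x = u ∧ y = a ∧ z = b) ∨ (x = a ∧ y = b ∧ z = w) := by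
  rcases l₁ with _ | ⟨_, _ | ⟨_, l₁⟩⟩
  · simp_all
  · simp_all
  · have := congrArg List.length h
    simp only [List.length_cons, List.length_append, List.length_nil] at this
    omega

/-- A collider on this path would need the edge `u → a` or `w → b`, reversing an existing edge. -/
theorem Acyclic.not_blockedPath_fork_chain (hE : Acyclic E) {Z : Set V} {u a b w : V}
    (hau : E a u) (hab : E a b) (hbw : E b w) (ha : a ∉ Z) (hb : b ∉ Z) :
    ¬ BlockedPath E Z [u, a, b, w] := by
  rintro ⟨l₁, l₂, x, y, z, hl, hblock⟩
  rcases List.consecutive_triple_of_four hl with ⟨rfl, rfl, rfl⟩ | ⟨rfl, rfl, rfl⟩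
  · rcases hblock with ⟨-, hmem⟩ | ⟨⟨hxy, -⟩, -⟩
    · exact ha hmem
    · exact hE.not_edge_of_edge hau hxy
  · rcases hblock with ⟨-, hmem⟩ | ⟨⟨-, hzy⟩, -⟩
    · exact hb hmem
    · exact hE.not_edge_of_edge hbw hzy

end DSeparation

theorem noisy_faithful_dag_detects_parents_general
    (n ns : ℕ) (Xv Ev Ov : Fin n → Type) (Sv E'v O'v : Fin ns → Type)
    [∀ i, Fintype (Xv i)] [∀ i, DecidableEq (Xv i)]
    [∀ i, Fintype (Ev i)] [∀ i, DecidableEq (Ev i)]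
    [∀ i, Fintype (Ov i)] [∀ i, DecidableEq (Ov i)]
    [∀ j, Fintype (Sv j)] [∀ j, DecidableEq (Sv j)]
    [∀ j, Fintype (E'v j)] [∀ j, DecidableEq (E'v j)]
    [∀ j, Fintype (O'v j)] [∀ j, DecidableEq (O'v j)]
    (E : NoisyVar n ns → NoisyVar n ns → Prop)
    (Pa : Fin ns → Finset (Fin n))
    (hacyc : Acyclic E)
    -- the parents of each clean next-step variable S'ⱼ are the Pa(S'ⱼ) ⊆ X …
    (hSparents : ∀ (j : Fin ns) (u : NoisyVar n ns),
      E u (.s j) ↔ ∃ i ∈ Pa j, u = .x i)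
    -- … and its only child is Ŝ'ⱼ
    (hSchild : ∀ (j : Fin ns) (v : NoisyVar n ns), E (.s j) v ↔ v = .sh j)
    -- each X̂ᵢ has exactly the parents {Xᵢ, εᵢ} and no children
    (hXhParents : ∀ (i : Fin n) (u : NoisyVar n ns),
      E u (.xh i) ↔ (u = .x i ∨ u = .eps i))
    -- joint distribution of all the variables, faithful to the graph
    (p : (∀ v, nval Xv Ev Ov Sv E'v O'v v) → ℝ)
    (hfaith : FaithfulTo p E) :
    ∀ (i : Fin n) (j : Fin ns), i ∈ Pa j →
      ¬ CondIndep p {NoisyVar.xh i} {NoisyVar.sh j}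
        ((Finset.univ.image (NoisyVar.xh : Fin n → NoisyVar n ns)) \ {NoisyVar.xh i}) := by
  intro i j hij hCI
  have hsep := hfaith _ _ _ (by simp) (by simp) (by simp) hCI
  have hXXh : E (.x i) (.xh i) := (hXhParents i _).mpr (.inl rfl)
  have hXS : E (.x i) (.s j) := (hSparents j _).mpr ⟨i, hij, rfl⟩
  have hSSh : E (.s j) (.sh j) := (hSchild j _).mpr rfl
  exact hacyc.not_blockedPath_fork_chain hXXh hXS hSSh (by simp) (by simp)
    (hsep _ (isUndirPath_fork_chain hXXh hXS hSSh (by simp))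
      ⟨.xh i, by simp, rfl⟩ ⟨.sh j, by simp, rfl⟩)

/-- In the augmented DAG of the noisy-observation model, if the joint
distribution is faithful to the graph, then for every clean edge Xᵢ → S'ⱼ the conditional
independence X̂ᵢ ⊥ Ŝ'ⱼ | (X̂ \ {X̂ᵢ}) fails. -/
theorem noisy_faithful_dag_detects_parents
    (n ns : ℕ) (Xv Ev Ov : Fin n → Type) (Sv E'v O'v : Fin ns → Type)
    [∀ i, Fintype (Xv i)] [∀ i, DecidableEq (Xv i)] [∀ i, Nonempty (Xv i)]
    [∀ i, Fintype (Ev i)] [∀ i, DecidableEq (Ev i)] [∀ i, Nonempty (Ev i)]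
    [∀ i, Fintype (Ov i)] [∀ i, DecidableEq (Ov i)] [∀ i, Nonempty (Ov i)]
    [∀ j, Fintype (Sv j)] [∀ j, DecidableEq (Sv j)] [∀ j, Nonempty (Sv j)]
    [∀ j, Fintype (E'v j)] [∀ j, DecidableEq (E'v j)] [∀ j, Nonempty (E'v j)]
    [∀ j, Fintype (O'v j)] [∀ j, DecidableEq (O'v j)] [∀ j, Nonempty (O'v j)]
    (E : NoisyVar n ns → NoisyVar n ns → Prop)
    (Pa : Fin ns → Finset (Fin n))
    (hacyc : Acyclic E)
    -- the parents of each clean next-step variable S'ⱼ are the Pa(S'ⱼ) ⊆ X …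
    (hSparents : ∀ (j : Fin ns) (u : NoisyVar n ns),
      E u (.s j) ↔ ∃ i ∈ Pa j, u = .x i)
    -- … and its only child is Ŝ'ⱼ
    (hSchild : ∀ (j : Fin ns) (v : NoisyVar n ns), E (.s j) v ↔ v = .sh j)
    -- each εᵢ is a root whose only child is X̂ᵢ
    (hEpsRoot : ∀ (i : Fin n) (u : NoisyVar n ns), ¬ E u (.eps i))
    (hEpsChild : ∀ (i : Fin n) (v : NoisyVar n ns), E (.eps i) v ↔ v = .xh i)
    -- each ε'ⱼ is a root whose only child is Ŝ'ⱼ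
    (hEps'Root : ∀ (j : Fin ns) (u : NoisyVar n ns), ¬ E u (.eps' j))
    (hEps'Child : ∀ (j : Fin ns) (v : NoisyVar n ns), E (.eps' j) v ↔ v = .sh j)
    -- each X̂ᵢ has exactly the parents {Xᵢ, εᵢ} and no children
    (hXhParents : ∀ (i : Fin n) (u : NoisyVar n ns),
      E u (.xh i) ↔ (u = .x i ∨ u = .eps i))
    (hXhChild : ∀ (i : Fin n) (v : NoisyVar n ns), ¬ E (.xh i) v)
    -- each Ŝ'ⱼ has exactly the parents {S'ⱼ, ε'ⱼ} and no children
    (hShParents : ∀ (j : Fin ns) (u : NoisyVar n ns),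
      E u (.sh j) ↔ (u = .s j ∨ u = .eps' j))
    (hShChild : ∀ (j : Fin ns) (v : NoisyVar n ns), ¬ E (.sh j) v)
    -- the clean current variables form a DAG among themselves
    (hXparents : ∀ (i : Fin n) (u : NoisyVar n ns), E u (.x i) → ∃ i', u = .x i')
    -- joint distribution of all the variables, faithful to the graph
    (p : (∀ v, nval Xv Ev Ov Sv E'v O'v v) → ℝ)
    (hp0 : ∀ z, 0 ≤ p z) (hpsum : ∑ z, p z = 1)
    (hfaith : FaithfulTo p E) :
    ∀ (i : Fin n) (j : Fin ns), i ∈ Pa j →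
      ¬ CondIndep p {NoisyVar.xh i} {NoisyVar.sh j}
        ((Finset.univ.image (NoisyVar.xh : Fin n → NoisyVar n ns)) \ {NoisyVar.xh i}) :=
  noisy_faithful_dag_detects_parents_general n ns Xv Ev Ov Sv E'v O'v E Pa hacyc hSparents hSchild
    hXhParents p hfaith
end
end

section
/- Consider an object-oriented FMDP with independent transitions whose transition kernel satisfies result symmetry and causation symmetry, and let p be any full-support joint probability mass function on (S, A, S') consistent with the transition kernel. Say that a current-step attribute O_r.U is an identified parent of a next-step attribute O_i.V' when the conditional independence O_r.U ⊥_p O_i.V' | ((S, A) \ {O_r.U}) fails. Then the identified graph is an object-oriented causal graph: (1) for any two instances O_a, O_b of a common class with field U and state field V, O_a.U is an identified parent of O_a.V' if and only if O_b.U is an identified parent of O_b.V'; and (2) whenever O_a, O_b are instances of a common class C_l with field U, O_i, O_j are instances of a common class C_k with state field V, i ≠ a, and j ≠ b, then O_a.U is an identified parent of O_i.V' if and only if O_b.U is an identified parent of O_j.V'. -/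
open Finset

noncomputable section

/-- Conditional probability of the value of coordinate `v` given the values of `P`. -/
def condP {V : Type*} [Fintype V] [DecidableEq V] {val : V → Type*}
    [∀ v, Fintype (val v)] [∀ v, DecidableEq (val v)]
    (p : (∀ v, val v) → ℝ) (v : V) (P : Finset V) (x : ∀ v, val v) : ℝ :=
  marg p (insert v P) x / marg p P x

/-- Variables of an FMDP: states, actions, next states. -/
abbrev FVar (ns na : ℕ) := Fin ns ⊕ (Fin na ⊕ Fin ns)

/-- Value types of FMDP variables. -/
def fv {ns na : ℕ} (Sv : Fin ns → Type) (Av : Fin na → Type) : FVar ns na → Type :=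
  Sum.elim Sv (Sum.elim Av Sv)

instance {ns na : ℕ} (Sv : Fin ns → Type) (Av : Fin na → Type)
    [∀ i, Fintype (Sv i)] [∀ j, Fintype (Av j)] : ∀ v, Fintype (fv Sv Av v)
  | .inl i => inferInstanceAs (Fintype (Sv i))
  | .inr (.inl j) => inferInstanceAs (Fintype (Av j))
  | .inr (.inr k) => inferInstanceAs (Fintype (Sv k))

instance {ns na : ℕ} (Sv : Fin ns → Type) (Av : Fin na → Type)
    [∀ i, DecidableEq (Sv i)] [∀ j, DecidableEq (Av j)] : ∀ v, DecidableEq (fv Sv Av v)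
  | .inl i => inferInstanceAs (DecidableEq (Sv i))
  | .inr (.inl j) => inferInstanceAs (DecidableEq (Av j))
  | .inr (.inr k) => inferInstanceAs (DecidableEq (Sv k))

/-- The set of current-step coordinates. -/
def curSet (ns na : ℕ) : Finset (FVar ns na) :=
  (Finset.univ.image (Sum.inl : Fin ns → FVar ns na)) ∪
    (Finset.univ.image (fun j : Fin na => (Sum.inr (Sum.inl j) : FVar ns na)))

/-- A joint pmf `p` on (S, A, S') is consistent with the transition kernel `T`. -/
def FConsistent {ns na : ℕ} {Sv : Fin ns → Type} {Av : Fin na → Type}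
    [∀ i, Fintype (Sv i)] [∀ j, Fintype (Av j)]
    [∀ i, DecidableEq (Sv i)] [∀ j, DecidableEq (Av j)]
    (p : (∀ v, fv Sv Av v) → ℝ)
    (T : (∀ i, Sv i) → (∀ j, Av j) → (∀ k, Sv k) → ℝ) : Prop :=
  ∀ x, p x = marg p (curSet ns na) x *
    T (fun i => x (.inl i)) (fun j => x (.inr (.inl j))) (fun k => x (.inr (.inr k)))

/-- The specification of an object-oriented FMDP: `K` classes, class `k` having `Nk k`
instances, state fields `SF k` and action fields `AF k`, with finite nonempty value types. -/
structure OOSpec where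
  K : ℕ
  Nk : Fin K → ℕ
  SF : Fin K → Type
  AF : Fin K → Type
  SVal : ∀ k, SF k → Type
  AVal : ∀ k, AF k → Type
  finSF : ∀ k, Fintype (SF k)
  finAF : ∀ k, Fintype (AF k)
  deqSF : ∀ k, DecidableEq (SF k)
  deqAF : ∀ k, DecidableEq (AF k)
  finSVal : ∀ k u, Fintype (SVal k u)
  finAVal : ∀ k v, Fintype (AVal k v)
  deqSVal : ∀ k u, DecidableEq (SVal k u)
  deqAVal : ∀ k v, DecidableEq (AVal k v)
  neSVal : ∀ k u, Nonempty (SVal k u)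
  neAVal : ∀ k v, Nonempty (AVal k v)

attribute [instance] OOSpec.finSF OOSpec.finAF OOSpec.deqSF OOSpec.deqAF
  OOSpec.finSVal OOSpec.finAVal OOSpec.deqSVal OOSpec.deqAVal
  OOSpec.neSVal OOSpec.neAVal

namespace OOSpec

variable (σ : OOSpec)

/-- Objects: the `m`-th instance of class `k`. -/
abbrev ObjIdx := Σ k : Fin σ.K, Fin (σ.Nk k)

/-- The fields of class `k`: state fields and action fields. -/
abbrev Fd (k : Fin σ.K) := σ.SF k ⊕ σ.AF k

/-- Value type of each field of class `k`. -/
def fval (k : Fin σ.K) : σ.Fd k → Type := Sum.elim (σ.SVal k) (σ.AVal k)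

instance (k : Fin σ.K) : ∀ f : σ.Fd k, Fintype (σ.fval k f)
  | .inl u => inferInstanceAs (Fintype (σ.SVal k u))
  | .inr v => inferInstanceAs (Fintype (σ.AVal k v))

instance (k : Fin σ.K) : ∀ f : σ.Fd k, DecidableEq (σ.fval k f)
  | .inl u => inferInstanceAs (DecidableEq (σ.SVal k u))
  | .inr v => inferInstanceAs (DecidableEq (σ.AVal k v))

/-- The attribute tuple of an instance of class `k`. -/
abbrev Obj (k : Fin σ.K) := ∀ f : σ.Fd k, σ.fval k f

/-- Current configurations: an attribute tuple for every object. -/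
abbrev Cur := ∀ o : σ.ObjIdx, σ.Obj o.1

/-- Next-step configurations: values of all next-step state attributes. -/
abbrev Nxt := ∀ o : σ.ObjIdx, ∀ u : σ.SF o.1, σ.SVal o.1 u

theorem fst_swap (a b o : σ.ObjIdx) (h : a.1 = b.1) :
    (Equiv.swap a b o).1 = o.1 := by
  rcases eq_or_ne o a with rfl | ha
  · rw [Equiv.swap_apply_left]; exact h.symm
  · rcases eq_or_ne o b with rfl | hb
    · rw [Equiv.swap_apply_right]; exact h
    · rw [Equiv.swap_apply_of_ne_of_ne ha hb]

/-- The involution σ_{ab} on current configurations exchanging the attribute tuples of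
two instances `a` and `b` of a common class. -/
def swapCur (a b : σ.ObjIdx) (h : a.1 = b.1) (w : σ.Cur) : σ.Cur :=
  fun o => cast (congrArg σ.Obj (σ.fst_swap a b o h)) (w (Equiv.swap a b o))

/-- The conditional law, under `T`, of object `o`'s next-step state attributes at `w`. -/
def objLaw (T : σ.Cur → σ.Nxt → ℝ) (o : σ.ObjIdx) (w : σ.Cur)
    (y : ∀ u : σ.SF o.1, σ.SVal o.1 u) : ℝ :=
  ∑ x' : σ.Nxt, if x' o = y then T w x' else 0

/-- The marginal of `T(· | w)` on the single next-step coordinate `O_o.u'`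
(the coordinate kernel `T_{o,u}`). -/
def coordKer (T : σ.Cur → σ.Nxt → ℝ) (o : σ.ObjIdx) (u : σ.SF o.1) (w : σ.Cur)
    (y : σ.SVal o.1 u) : ℝ :=
  ∑ x' : σ.Nxt, if x' o u = y then T w x' else 0

/-- `T` has independent transitions: it factorizes over the next-step coordinates as the
product of its coordinate kernels. -/
def IndepTrans (T : σ.Cur → σ.Nxt → ℝ) : Prop :=
  ∀ (w : σ.Cur) (x' : σ.Nxt),
    T w x' = ∏ ou : Σ o : σ.ObjIdx, σ.SF o.1, σ.coordKer T ou.1 ou.2 w (x' ou.1 ou.2)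

/-- A function of the current configuration depends on the current-step coordinate
`O_j.f`: it takes different values at two configurations differing only in that coordinate. -/
def DependsOn {α : Type*} (κ : σ.Cur → α) (j : σ.ObjIdx) (f : σ.Fd j.1) : Prop :=
  ∃ w w' : σ.Cur,
    (∀ (o : σ.ObjIdx) (g : σ.Fd o.1),
      (⟨o, g⟩ : Σ o : σ.ObjIdx, σ.Fd o.1) ≠ ⟨j, f⟩ → w o g = w' o g) ∧ κ w ≠ κ w'

/-- Result symmetry: instances of a common class transit by the same rule. -/
def ResultSym (T : σ.Cur → σ.Nxt → ℝ) : Prop :=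
  ∀ (k : Fin σ.K) (m m' : Fin (σ.Nk k)) (w : σ.Cur) (y : ∀ u : σ.SF k, σ.SVal k u),
    σ.objLaw T ⟨k, m⟩ w y = σ.objLaw T ⟨k, m'⟩ (σ.swapCur ⟨k, m⟩ ⟨k, m'⟩ rfl w) y

/-- Causation symmetry: two other instances of a common class are interchangeable for the
transition of any object. -/
def CausSym (T : σ.Cur → σ.Nxt → ℝ) : Prop :=
  ∀ (i : σ.ObjIdx) (k : Fin σ.K) (m m' : Fin (σ.Nk k)),
    (⟨k, m⟩ : σ.ObjIdx) ≠ i → (⟨k, m'⟩ : σ.ObjIdx) ≠ i →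
    ∀ (w : σ.Cur) (y : ∀ u : σ.SF i.1, σ.SVal i.1 u),
      σ.objLaw T i w y = σ.objLaw T i (σ.swapCur ⟨k, m⟩ ⟨k, m'⟩ rfl w) y

end OOSpec

namespace OOSpec

variable (σ : OOSpec)

/-- Current-step coordinates: the attribute `O_o.f`. -/
abbrev CurV := Σ o : σ.ObjIdx, σ.Fd o.1

/-- Next-step coordinates: the attribute `O_o.u'`. -/
abbrev NxtV := Σ o : σ.ObjIdx, σ.SF o.1

/-- All variables of the OO-FMDP. -/
abbrev Var := σ.CurV ⊕ σ.NxtV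

/-- Value type of each variable. -/
def vval : σ.Var → Type
  | .inl v => σ.fval v.1.1 v.2
  | .inr v => σ.SVal v.1.1 v.2

instance : ∀ v : σ.Var, Fintype (σ.vval v)
  | .inl v => inferInstanceAs (Fintype (σ.fval v.1.1 v.2))
  | .inr v => inferInstanceAs (Fintype (σ.SVal v.1.1 v.2))

instance : ∀ v : σ.Var, DecidableEq (σ.vval v)
  | .inl v => inferInstanceAs (DecidableEq (σ.fval v.1.1 v.2))
  | .inr v => inferInstanceAs (DecidableEq (σ.SVal v.1.1 v.2))

/-- Full configurations of all variables. -/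
abbrev Cfg := ∀ v : σ.Var, σ.vval v

/-- The current configuration determined by a full configuration. -/
def curOf (d : σ.Cfg) : σ.Cur := fun o f => d (.inl ⟨o, f⟩)

/-- The next-step configuration determined by a full configuration. -/
def nxtOf (d : σ.Cfg) : σ.Nxt := fun o u => d (.inr ⟨o, u⟩)

/-- Building a full configuration from a current and a next configuration. -/
def mkCfg (w : σ.Cur) (x' : σ.Nxt) : σ.Cfg
  | .inl v => w v.1 v.2
  | .inr v => x' v.1 v.2

/-- The set of all current-step coordinates. -/
def curVars : Finset σ.Var := Finset.univ.image Sum.inl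

/-- A joint pmf on (S, A, S') is consistent with the transition kernel `T`. -/
def Consistent (p : σ.Cfg → ℝ) (T : σ.Cur → σ.Nxt → ℝ) : Prop :=
  ∀ d : σ.Cfg, p d = marg p σ.curVars d * T (σ.curOf d) (σ.nxtOf d)

end OOSpec

/-! Full support and consistency give `p (w, x') = q w * T w x'` with `q > 0`, and then the
conditional independence `O_r.U ⊥ O_i.V' | rest` says that the coordinate kernel `T_{i,V}(y | w)`
equals its `q`-weighted average over the configurations agreeing with `w` off `O_r.U`, i.e. that
it does not depend on `O_r.U`. So identified parenthood is functional dependence of coordinate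
kernels, which the swaps `σ_ab` transport: result symmetry moves the child, causation symmetry
moves the parent. In (2), when the child `O_i` is the parent's partner `O_b`, result symmetry
first exchanges the roles of `O_a` and `O_b`. -/

theorem Equivalence.forall_mul_sum_eq_sum_mul_iff {α : Type*} [Fintype α] {r : α → α → Prop}
    [DecidableRel r] (hr : Equivalence r) {q : α → ℝ} (hq : ∀ a, 0 < q a) (f : α → ℝ) :
    (∀ a, f a * ∑ b, (if r b a then q b else 0) = ∑ b, if r b a then q b * f b else 0) ↔
      ∀ a b, r a b → f a = f b := by
  constructor
  · intro h a b hab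
    have hclass : ∀ c, r c b ↔ r c a := fun c => ⟨(hr.trans · (hr.symm hab)), (hr.trans · hab)⟩
    have hmass : 0 < ∑ c, if r c a then q c else 0 :=
      Finset.sum_pos' (fun c _ => by split_ifs <;> [exact (hq c).le; rfl])
        ⟨a, Finset.mem_univ a, by simp [hr.refl a, hq a]⟩
    have hb := h b
    simp only [hclass] at hb
    exact mul_right_cancel₀ hmass.ne' ((h a).trans hb.symm)
  · intro h a
    rw [Finset.mul_sum]
    refine Finset.sum_congr rfl fun b _ => ?_
    split_ifs with hba
    · rw [h b a hba, mul_comm]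
    · rw [mul_zero]

namespace OOSpec

variable {σ : OOSpec}

def mkCfgEquiv (σ : OOSpec) : σ.Cur × σ.Nxt ≃ σ.Cfg where
  toFun wx := σ.mkCfg wx.1 wx.2
  invFun d := (σ.curOf d, σ.nxtOf d)
  left_inv _ := rfl
  right_inv d := by funext v; cases v <;> rfl

def curMass (p : σ.Cfg → ℝ) (w : σ.Cur) : ℝ := ∑ x', p (σ.mkCfg w x')

def AgreeOn (E : Finset σ.Var) (w : σ.Cur) (d : σ.Cfg) : Prop :=
  ∀ c : σ.CurV, Sum.inl c ∈ E → w c.1 c.2 = σ.curOf d c.1 c.2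

def AgreeOff (c : σ.CurV) (w w' : σ.Cur) : Prop :=
  ∀ (o : σ.ObjIdx) (g : σ.Fd o.1), (⟨o, g⟩ : σ.CurV) ≠ c → w o g = w' o g

instance (E : Finset σ.Var) (w : σ.Cur) (d : σ.Cfg) : Decidable (AgreeOn E w d) := by
  unfold AgreeOn; infer_instance

instance (c : σ.CurV) (w w' : σ.Cur) : Decidable (AgreeOff c w w') := by
  unfold AgreeOff; infer_instance

theorem marg_eq_sum_agreeOn (p : σ.Cfg → ℝ) (E : Finset σ.Var) (d : σ.Cfg) :
    marg p E d = ∑ w, if AgreeOn E w d then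
      ∑ x', if ∀ n : σ.NxtV, Sum.inr n ∈ E → x' n.1 n.2 = σ.nxtOf d n.1 n.2
        then p (σ.mkCfg w x') else 0 else 0 := by
  rw [marg, ← (mkCfgEquiv σ).sum_comp, Fintype.sum_prod_type]
  refine Finset.sum_congr rfl fun w _ => ?_
  rw [ite_sum_zero]
  refine Finset.sum_congr rfl fun x' _ => ?_
  rw [← ite_and]
  congr 1
  exact propext Sum.forall

theorem marg_eq_sum_curMass (p : σ.Cfg → ℝ) {E : Finset σ.Var}
    (hE : ∀ n : σ.NxtV, Sum.inr n ∉ E) (d : σ.Cfg) :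
    marg p E d = ∑ w, if AgreeOn E w d then curMass p w else 0 := by
  simp only [marg_eq_sum_agreeOn, hE, IsEmpty.forall_iff, implies_true, if_true]
  rfl

theorem agreeOn_curVars_iff {w : σ.Cur} {d : σ.Cfg} : AgreeOn σ.curVars w d ↔ w = σ.curOf d := by
  simp [AgreeOn, curVars, funext_iff, Sigma.forall]

theorem agreeOn_curVars_sdiff_iff {c : σ.CurV} {w : σ.Cur} {d : σ.Cfg} :
    AgreeOn (σ.curVars \ {Sum.inl c}) w d ↔ AgreeOff c w (σ.curOf d) := by
  simp [AgreeOn, AgreeOff, curVars, Sigma.forall]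

theorem marg_curVars (p : σ.Cfg → ℝ) (d : σ.Cfg) :
    marg p σ.curVars d = curMass p (σ.curOf d) := by
  simp only [marg_eq_sum_curMass p (E := σ.curVars) (by simp [curVars]), agreeOn_curVars_iff,
    Finset.sum_ite_eq', Finset.mem_univ, if_true]

variable {p : σ.Cfg → ℝ} {T : σ.Cur → σ.Nxt → ℝ}

theorem Consistent.apply_mkCfg (hpcons : σ.Consistent p T) (w : σ.Cur) (x' : σ.Nxt) :
    p (σ.mkCfg w x') = curMass p w * T w x' := by
  rw [hpcons, marg_curVars]
  rfl

theorem Consistent.marg_insert_inr (hpcons : σ.Consistent p T) {E : Finset σ.Var}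
    (hE : ∀ n : σ.NxtV, Sum.inr n ∉ E) (n : σ.NxtV) (d : σ.Cfg) :
    marg p (insert (Sum.inr n) E) d =
      ∑ w, if AgreeOn E w d then curMass p w * σ.coordKer T n.1 n.2 w (σ.nxtOf d n.1 n.2)
        else 0 := by
  rw [marg_eq_sum_agreeOn]
  refine Finset.sum_congr rfl fun w _ => ?_
  have hagree : AgreeOn (insert (Sum.inr n) E) w d ↔ AgreeOn E w d := by
    simp [AgreeOn]
  have hnext (x' : σ.Nxt) : (∀ n' : σ.NxtV, Sum.inr n' ∈ insert (Sum.inr n) E →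
      x' n'.1 n'.2 = σ.nxtOf d n'.1 n'.2) ↔ x' n.1 n.2 = σ.nxtOf d n.1 n.2 := by
    simp [hE]
  simp only [hagree, hnext, hpcons.apply_mkCfg, coordKer, Finset.mul_sum, mul_ite, mul_zero]

theorem curMass_pos (hppos : ∀ d, 0 < p d) (w : σ.Cur) : 0 < curMass p w :=
  Finset.sum_pos (fun _ _ => hppos _) Finset.univ_nonempty

theorem exists_curOf_nxtOf_eq (n : σ.NxtV) (w : σ.Cur) (y : σ.SVal n.1.1 n.2) :
    ∃ d : σ.Cfg, σ.curOf d = w ∧ σ.nxtOf d n.1 n.2 = y := by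
  obtain ⟨x'⟩ := (inferInstance : Nonempty σ.Nxt)
  exact ⟨σ.mkCfg w (Function.update x' n.1 (Function.update (x' n.1) n.2 y)), rfl, by
    simp [nxtOf, mkCfg]⟩

theorem Consistent.condIndep_iff (hpcons : σ.Consistent p T) (hppos : ∀ d, 0 < p d)
    (c : σ.CurV) (n : σ.NxtV) :
    CondIndep p {Sum.inl c} {Sum.inr n} (σ.curVars \ {Sum.inl c}) ↔
      ∀ (y : σ.SVal n.1.1 n.2) (w : σ.Cur),
        σ.coordKer T n.1 n.2 w y * ∑ v, (if AgreeOff c v w then curMass p v else 0) =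
          ∑ v, if AgreeOff c v w then curMass p v * σ.coordKer T n.1 n.2 v y else 0 := by
  have hc : Sum.inl c ∈ σ.curVars := by simp [curVars]
  have hcur : ∀ n' : σ.NxtV, Sum.inr n' ∉ σ.curVars := by simp [curVars]
  have hZ : ∀ n' : σ.NxtV, Sum.inr n' ∉ σ.curVars \ {Sum.inl c} := by simp [curVars]
  have hXZ : {Sum.inl c} ∪ (σ.curVars \ {Sum.inl c}) = σ.curVars :=
    Finset.union_sdiff_of_subset (Finset.singleton_subset_iff.2 hc)
  have hXYZ : {Sum.inl c} ∪ {Sum.inr n} ∪ (σ.curVars \ {Sum.inl c}) =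
      insert (Sum.inr n) σ.curVars := by
    rw [Finset.union_right_comm, hXZ, Finset.union_comm, ← Finset.insert_eq]
  rw [CondIndep, hXYZ, hXZ, ← Finset.insert_eq]
  simp only [hpcons.marg_insert_inr hcur, hpcons.marg_insert_inr hZ, marg_eq_sum_curMass p hZ,
    marg_curVars, agreeOn_curVars_iff, agreeOn_curVars_sdiff_iff, Finset.sum_ite_eq',
    Finset.mem_univ, if_true, mul_assoc, mul_right_inj' (curMass_pos hppos _).ne']
  refine ⟨fun h y w => ?_, fun h d => h _ _⟩
  obtain ⟨d, rfl, rfl⟩ := exists_curOf_nxtOf_eq n w y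
  exact h d

theorem equivalence_agreeOff (c : σ.CurV) : Equivalence (AgreeOff c) where
  refl _ _ _ _ := rfl
  symm h o g hne := (h o g hne).symm
  trans h h' o g hne := (h o g hne).trans (h' o g hne)

theorem dependsOn_iff_exists_agreeOff {α : Type*} {κ : σ.Cur → α} {j : σ.ObjIdx} {f : σ.Fd j.1} :
    σ.DependsOn κ j f ↔ ∃ w w', AgreeOff ⟨j, f⟩ w w' ∧ κ w ≠ κ w' :=
  Iff.rfl

theorem Consistent.not_condIndep_iff_dependsOn (hpcons : σ.Consistent p T)
    (hppos : ∀ d, 0 < p d) (r : σ.ObjIdx) (U : σ.Fd r.1) (i : σ.ObjIdx) (V : σ.SF i.1) :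
    ¬ CondIndep p {Sum.inl ⟨r, U⟩} {Sum.inr ⟨i, V⟩} (σ.curVars \ {Sum.inl ⟨r, U⟩}) ↔
      σ.DependsOn (σ.coordKer T i V) r U := by
  rw [not_iff_comm, hpcons.condIndep_iff hppos, dependsOn_iff_exists_agreeOff]
  refine ((forall_congr' fun y => (equivalence_agreeOff _).forall_mul_sum_eq_sum_mul_iff
    (curMass_pos hppos) (σ.coordKer T i V · y)).trans ?_).symm
  simp only [ne_eq, funext_iff, not_exists, not_and, not_not]
  exact ⟨fun h w w' hww' y => h y w w' hww', fun h y w w' hww' => h w w' hww' y⟩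

section Swap

variable {k : Fin σ.K} {m m' : Fin (σ.Nk k)} (w : σ.Cur)

theorem swapCur_apply_left : σ.swapCur ⟨k, m⟩ ⟨k, m'⟩ rfl w ⟨k, m⟩ = w ⟨k, m'⟩ := by
  rw [swapCur, cast_eq_iff_heq, Equiv.swap_apply_left]

theorem swapCur_apply_right : σ.swapCur ⟨k, m⟩ ⟨k, m'⟩ rfl w ⟨k, m'⟩ = w ⟨k, m⟩ := by
  rw [swapCur, cast_eq_iff_heq, Equiv.swap_apply_right]

theorem swapCur_apply_of_ne {o : σ.ObjIdx} (hm : o ≠ ⟨k, m⟩) (hm' : o ≠ ⟨k, m'⟩) :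
    σ.swapCur ⟨k, m⟩ ⟨k, m'⟩ rfl w o = w o := by
  rw [swapCur, cast_eq_iff_heq, Equiv.swap_apply_of_ne_of_ne hm hm']

theorem swapCur_comm : σ.swapCur ⟨k, m⟩ ⟨k, m'⟩ rfl w = σ.swapCur ⟨k, m'⟩ ⟨k, m⟩ rfl w := by
  funext o
  refine eq_of_heq ((cast_heq _ _).trans (HEq.trans ?_ (cast_heq _ _).symm))
  rw [Equiv.swap_comm]

end Swap

namespace AgreeOff

variable {k : Fin σ.K} {m m' : Fin (σ.Nk k)} {w w' : σ.Cur}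

theorem swapCur_of_ne {r : σ.ObjIdx} {U : σ.Fd r.1} (hm : r ≠ ⟨k, m⟩) (hm' : r ≠ ⟨k, m'⟩)
    (h : AgreeOff ⟨r, U⟩ w w') :
    AgreeOff ⟨r, U⟩ (σ.swapCur ⟨k, m⟩ ⟨k, m'⟩ rfl w) (σ.swapCur ⟨k, m⟩ ⟨k, m'⟩ rfl w') := by
  intro o g hne
  rcases eq_or_ne o ⟨k, m⟩ with rfl | hom
  · rw [swapCur_apply_left, swapCur_apply_left]
    exact h ⟨k, m'⟩ g fun he => hm' (congrArg Sigma.fst he).symm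
  rcases eq_or_ne o ⟨k, m'⟩ with rfl | hom'
  · rw [swapCur_apply_right, swapCur_apply_right]
    exact h ⟨k, m⟩ g fun he => hm (congrArg Sigma.fst he).symm
  rw [swapCur_apply_of_ne w hom hom', swapCur_apply_of_ne w' hom hom']
  exact h o g hne

theorem swapCur_left {U : σ.Fd k} (h : AgreeOff ⟨⟨k, m⟩, U⟩ w w') :
    AgreeOff ⟨⟨k, m'⟩, U⟩ (σ.swapCur ⟨k, m⟩ ⟨k, m'⟩ rfl w) (σ.swapCur ⟨k, m⟩ ⟨k, m'⟩ rfl w') := by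
  intro o g hne
  rcases eq_or_ne o ⟨k, m⟩ with rfl | hom
  · rw [swapCur_apply_left, swapCur_apply_left]
    refine h ⟨k, m'⟩ g fun he => hne ?_
    simp only [Sigma.mk.inj_iff, heq_eq_eq, true_and] at he ⊢
    exact ⟨he.1.symm, he.2⟩
  rcases eq_or_ne o ⟨k, m'⟩ with rfl | hom'
  · rw [swapCur_apply_right, swapCur_apply_right]
    refine h ⟨k, m⟩ g fun he => hne ?_
    simp only [Sigma.mk.inj_iff, heq_eq_eq, true_and] at he ⊢
    exact he
  rw [swapCur_apply_of_ne w hom hom', swapCur_apply_of_ne w' hom hom']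
  exact h o g fun he => hom (congrArg Sigma.fst he)

theorem swapCur_right {U : σ.Fd k} (h : AgreeOff ⟨⟨k, m'⟩, U⟩ w w') :
    AgreeOff ⟨⟨k, m⟩, U⟩ (σ.swapCur ⟨k, m⟩ ⟨k, m'⟩ rfl w) (σ.swapCur ⟨k, m⟩ ⟨k, m'⟩ rfl w') := by
  rw [swapCur_comm w, swapCur_comm w']
  exact h.swapCur_left

end AgreeOff

theorem coordKer_eq_sum_objLaw (o : σ.ObjIdx) (u : σ.SF o.1) (w : σ.Cur) (y : σ.SVal o.1 u) :
    σ.coordKer T o u w y = ∑ ys, if ys u = y then σ.objLaw T o w ys else 0 := by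
  simp only [coordKer, objLaw, ite_sum_zero]
  rw [Finset.sum_comm]
  refine Finset.sum_congr rfl fun x' _ => ?_
  rw [Fintype.sum_eq_single (x' o) fun ys hne => by simp [Ne.symm hne]]
  simp

theorem ResultSym.coordKer_eq (hres : σ.ResultSym T) (k : Fin σ.K) (m m' : Fin (σ.Nk k))
    (V : σ.SF k) (w : σ.Cur) :
    σ.coordKer T ⟨k, m⟩ V w = σ.coordKer T ⟨k, m'⟩ V (σ.swapCur ⟨k, m⟩ ⟨k, m'⟩ rfl w) := by
  funext y
  simp only [coordKer_eq_sum_objLaw, hres k m m' w]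

theorem CausSym.coordKer_eq (hcaus : σ.CausSym T) {i : σ.ObjIdx} (V : σ.SF i.1) {k : Fin σ.K}
    {m m' : Fin (σ.Nk k)} (hm : (⟨k, m⟩ : σ.ObjIdx) ≠ i) (hm' : (⟨k, m'⟩ : σ.ObjIdx) ≠ i)
    (w : σ.Cur) :
    σ.coordKer T i V w = σ.coordKer T i V (σ.swapCur ⟨k, m⟩ ⟨k, m'⟩ rfl w) := by
  funext y
  simp only [coordKer_eq_sum_objLaw, hcaus i k m m' hm hm' w]

theorem DependsOn.of_map {α : Type*} {κ κ' : σ.Cur → α} {j j' : σ.ObjIdx} {f : σ.Fd j.1}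
    {f' : σ.Fd j'.1} (φ : σ.Cur → σ.Cur)
    (hφ : ∀ {w w'}, AgreeOff ⟨j, f⟩ w w' → AgreeOff ⟨j', f'⟩ (φ w) (φ w'))
    (hκ : ∀ w, κ w = κ' (φ w)) (h : σ.DependsOn κ j f) : σ.DependsOn κ' j' f' := by
  obtain ⟨w, w', hww', hne⟩ := h
  exact ⟨φ w, φ w', hφ hww', by rwa [← hκ, ← hκ]⟩

section Transport

variable {k : Fin σ.K} {m m' : Fin (σ.Nk k)}

theorem ResultSym.dependsOn_self (hres : σ.ResultSym T) {U : σ.Fd k} {V : σ.SF k}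
    (h : σ.DependsOn (σ.coordKer T ⟨k, m⟩ V) ⟨k, m⟩ U) :
    σ.DependsOn (σ.coordKer T ⟨k, m'⟩ V) ⟨k, m'⟩ U :=
  h.of_map _ AgreeOff.swapCur_left (hres.coordKer_eq k m m' V)

theorem ResultSym.dependsOn_swap (hres : σ.ResultSym T) {U : σ.Fd k} {V : σ.SF k}
    (h : σ.DependsOn (σ.coordKer T ⟨k, m'⟩ V) ⟨k, m⟩ U) :
    σ.DependsOn (σ.coordKer T ⟨k, m⟩ V) ⟨k, m'⟩ U :=
  h.of_map _ AgreeOff.swapCur_right (hres.coordKer_eq k m' m V)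

theorem ResultSym.dependsOn_of_ne (hres : σ.ResultSym T) {r : σ.ObjIdx} {U : σ.Fd r.1}
    {V : σ.SF k} (hm : r ≠ ⟨k, m⟩) (hm' : r ≠ ⟨k, m'⟩)
    (h : σ.DependsOn (σ.coordKer T ⟨k, m⟩ V) r U) :
    σ.DependsOn (σ.coordKer T ⟨k, m'⟩ V) r U :=
  h.of_map _ (AgreeOff.swapCur_of_ne hm hm') (hres.coordKer_eq k m m' V)

theorem CausSym.dependsOn (hcaus : σ.CausSym T) {i : σ.ObjIdx} {V : σ.SF i.1} {U : σ.Fd k}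
    (hm : (⟨k, m⟩ : σ.ObjIdx) ≠ i) (hm' : (⟨k, m'⟩ : σ.ObjIdx) ≠ i)
    (h : σ.DependsOn (σ.coordKer T i V) ⟨k, m⟩ U) :
    σ.DependsOn (σ.coordKer T i V) ⟨k, m'⟩ U :=
  h.of_map _ AgreeOff.swapCur_left (hcaus.coordKer_eq V hm hm')

end Transport

theorem dependsOn_coordKer_of_resultSym_causSym (hres : σ.ResultSym T) (hcaus : σ.CausSym T)
    {l : Fin σ.K} {a b : Fin (σ.Nk l)} {U : σ.Fd l} {k : Fin σ.K} {mi mj : Fin (σ.Nk k)}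
    {V : σ.SF k} (hia : (⟨k, mi⟩ : σ.ObjIdx) ≠ ⟨l, a⟩) (hjb : (⟨k, mj⟩ : σ.ObjIdx) ≠ ⟨l, b⟩)
    (h : σ.DependsOn (σ.coordKer T ⟨k, mi⟩ V) ⟨l, a⟩ U) :
    σ.DependsOn (σ.coordKer T ⟨k, mj⟩ V) ⟨l, b⟩ U := by
  by_cases hib : (⟨k, mi⟩ : σ.ObjIdx) = ⟨l, b⟩
  · obtain rfl : k = l := congrArg Sigma.fst hib
    obtain rfl : mi = b := by simpa using hib
    exact hres.dependsOn_of_ne hia hjb.symm (hres.dependsOn_swap h)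
  · exact hres.dependsOn_of_ne (Ne.symm hib) hjb.symm (hcaus.dependsOn hia.symm (Ne.symm hib) h)

end OOSpec

open OOSpec in
theorem oo_fmdp_identified_graph_is_object_oriented_general
    (σ : OOSpec) (T : σ.Cur → σ.Nxt → ℝ)
    (hres : σ.ResultSym T) (hcaus : σ.CausSym T)
    (p : σ.Cfg → ℝ)
    (hppos : ∀ d, 0 < p d) (hpcons : σ.Consistent p T) :
    -- (1) local edges are shared within a class
    (∀ (k : Fin σ.K) (m m' : Fin (σ.Nk k)) (U : σ.Fd k) (V : σ.SF k),
      (¬ CondIndep p {Sum.inl ⟨⟨k, m⟩, U⟩} {Sum.inr ⟨⟨k, m⟩, V⟩}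
          (σ.curVars \ {Sum.inl ⟨⟨k, m⟩, U⟩})) ↔
      (¬ CondIndep p {Sum.inl ⟨⟨k, m'⟩, U⟩} {Sum.inr ⟨⟨k, m'⟩, V⟩}
          (σ.curVars \ {Sum.inl ⟨⟨k, m'⟩, U⟩}))) ∧
    -- (2) global edges are shared between pairs of classes
    (∀ (l : Fin σ.K) (a b : Fin (σ.Nk l)) (U : σ.Fd l)
       (k : Fin σ.K) (mi mj : Fin (σ.Nk k)) (V : σ.SF k),
      (⟨k, mi⟩ : σ.ObjIdx) ≠ ⟨l, a⟩ → (⟨k, mj⟩ : σ.ObjIdx) ≠ ⟨l, b⟩ →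
      ((¬ CondIndep p {Sum.inl ⟨⟨l, a⟩, U⟩} {Sum.inr ⟨⟨k, mi⟩, V⟩}
          (σ.curVars \ {Sum.inl ⟨⟨l, a⟩, U⟩})) ↔
       (¬ CondIndep p {Sum.inl ⟨⟨l, b⟩, U⟩} {Sum.inr ⟨⟨k, mj⟩, V⟩}
          (σ.curVars \ {Sum.inl ⟨⟨l, b⟩, U⟩})))) := by
  simp only [hpcons.not_condIndep_iff_dependsOn hppos]
  exact ⟨fun k m m' U V => ⟨hres.dependsOn_self, hres.dependsOn_self⟩,
    fun l a b U k mi mj V hia hjb =>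
      ⟨dependsOn_coordKer_of_resultSym_causSym hres hcaus hia hjb,
        dependsOn_coordKer_of_resultSym_causSym hres hcaus hjb hia⟩⟩

open OOSpec in
/-- In an OO-FMDP with independent transitions, result symmetry and
causation symmetry, the graph identified by failures of the conditional independences
O_r.U ⊥_p O_i.V' | ((S,A) \ {O_r.U}) (for any full-support consistent pmf `p`) is an
object-oriented causal graph: identified parenthood is shared at class level, both for
local edges and for global edges. -/
theorem oo_fmdp_identified_graph_is_object_oriented
    (σ : OOSpec) (T : σ.Cur → σ.Nxt → ℝ)
    (hT0 : ∀ w x', 0 ≤ T w x') (hT1 : ∀ w, ∑ x', T w x' = 1)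
    (hind : σ.IndepTrans T) (hres : σ.ResultSym T) (hcaus : σ.CausSym T)
    (p : σ.Cfg → ℝ)
    (hppos : ∀ d, 0 < p d) (hpsum : ∑ d, p d = 1) (hpcons : σ.Consistent p T) :
    -- (1) local edges are shared within a class
    (∀ (k : Fin σ.K) (m m' : Fin (σ.Nk k)) (U : σ.Fd k) (V : σ.SF k),
      (¬ CondIndep p {Sum.inl ⟨⟨k, m⟩, U⟩} {Sum.inr ⟨⟨k, m⟩, V⟩}
          (σ.curVars \ {Sum.inl ⟨⟨k, m⟩, U⟩})) ↔
      (¬ CondIndep p {Sum.inl ⟨⟨k, m'⟩, U⟩} {Sum.inr ⟨⟨k, m'⟩, V⟩}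
          (σ.curVars \ {Sum.inl ⟨⟨k, m'⟩, U⟩}))) ∧
    -- (2) global edges are shared between pairs of classes
    (∀ (l : Fin σ.K) (a b : Fin (σ.Nk l)) (U : σ.Fd l)
       (k : Fin σ.K) (mi mj : Fin (σ.Nk k)) (V : σ.SF k),
      (⟨k, mi⟩ : σ.ObjIdx) ≠ ⟨l, a⟩ → (⟨k, mj⟩ : σ.ObjIdx) ≠ ⟨l, b⟩ →
      ((¬ CondIndep p {Sum.inl ⟨⟨l, a⟩, U⟩} {Sum.inr ⟨⟨k, mi⟩, V⟩}
          (σ.curVars \ {Sum.inl ⟨⟨l, a⟩, U⟩})) ↔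
       (¬ CondIndep p {Sum.inl ⟨⟨l, b⟩, U⟩} {Sum.inr ⟨⟨k, mj⟩, V⟩}
          (σ.curVars \ {Sum.inl ⟨⟨l, b⟩, U⟩})))) :=
  oo_fmdp_identified_graph_is_object_oriented_general σ T hres hcaus p hppos hpcons
end
end
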